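/- Suppose (H1) and (H2) hold with β > 0. Let φ̄ ∈ Γ be an upper solution and φ̲ a lower solution of −u'(t) + f(u_t) = 0 satisfying (C1) 0 ≤ φ̲(t) ≤ φ̄(t) ≤ K for all t ∈ ℝ, and (C3) t ↦ e^{βt}(φ̄(t) − φ̲(t)) is non-decreasing on ℝ. Define x₁(t) = ∫_{−∞}^{t} e^{−β(t−s)} H(φ̄)(s) ds. Then φ̲(t) ≤ x₁(t) ≤ φ̄(t) for all t ∈ ℝ. -/

import Mathlib

open Real Filter MeasureTheory

/-- The segment `u_t ∈ C([−τ,0],ℝ)` of a function `u : ℝ → ℝ`, `u_t(s) = u(t+s)`. -/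
def seg (τ : ℝ) (u : ℝ → ℝ) (t : ℝ) : Set.Icc (-τ) (0 : ℝ) → ℝ :=
  fun s => u (t + s.1)

/-!
Write `E x = exp (β x)`. Wherever `φ̄` and `φ̲` are differentiable, `(E φ̄)' = E (φ̄' + β φ̄)` lies
above `E H(φ̄)`, and `(E φ̲)' = E (φ̲' + β φ̲)` lies below `E H(φ̲)`, which (H2) and (C3) put below
`E H(φ̄)`. Since `E x₁(t) = ∫_{-∞}^t E H(φ̄)`, integrating these inequalities squeezes `E x₁` between
`E φ̲` and `E φ̄`, provided the integral of an a.e. derivative can be compared with the increment.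
For `E φ̄` it equals the increment: the profile condition makes `φ̄` Lipschitz, hence absolutely
continuous. The lower solution need not be absolutely continuous, but `E φ̲ = E φ̄ - E (φ̄ - φ̲)`,
where `E (φ̄ - φ̲)` is monotone by (C3), and the integral of the derivative of a monotone function
is at most its increment.
-/

open Set Topology

section Profile

variable {β K : ℝ} {φ : ℝ → ℝ}

/-- Increments over consecutive steps of length `s` shrink at most by the factor `exp (-β s)`, and
they sum to at most `K`. -/
lemma sub_le_mul_one_sub_exp_of_monotone_exp_mul_sub {s : ℝ} (hβ : 0 < β) (hφ : Monotone φ)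
    (h0 : ∀ t, 0 ≤ φ t) (hK : ∀ t, φ t ≤ K)
    (hΓ : Monotone fun t => exp (β * t) * (φ (t + s) - φ t)) (hs : 0 < s) (t : ℝ) :
    φ (t + s) - φ t ≤ K * (1 - exp (-(β * s))) := by
  set r := exp (-(β * s))
  have hr1 : r < 1 := exp_lt_one_iff.mpr (by nlinarith)
  have hstep (k : ℕ) : r ^ k * (φ (t + s) - φ t) ≤ φ (t + (k + 1) * s) - φ (t + k * s) := by
    have hE : exp (β * (t + k * s)) * r ^ k = exp (β * t) := by
      rw [← exp_nat_mul, ← exp_add]; ring_nf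
    have h := hΓ (le_add_of_nonneg_right (by positivity) : t ≤ t + k * s)
    simp only [← hE, add_assoc, ← add_one_mul, mul_assoc] at h
    exact le_of_mul_le_mul_left h (exp_pos _)
  have hsum (n : ℕ) : ∑ k ∈ Finset.range n, r ^ k * (φ (t + s) - φ t) ≤ K := by
    calc ∑ k ∈ Finset.range n, r ^ k * (φ (t + s) - φ t)
        ≤ ∑ k ∈ Finset.range n, (φ (t + (k + 1) * s) - φ (t + k * s)) :=
          Finset.sum_le_sum fun k _ => hstep k
      _ = φ (t + n * s) - φ t := by
          simpa using Finset.sum_range_sub (fun k : ℕ => φ (t + k * s)) n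
      _ ≤ K := by linarith [hK (t + n * s), h0 t]
  have htsum := Real.tsum_le_of_sum_range_le
    (fun k => mul_nonneg (pow_nonneg (exp_pos _).le k) (sub_nonneg.2 (hφ (by linarith)))) hsum
  rw [tsum_mul_right, tsum_geometric_of_lt_one (exp_pos _).le hr1] at htsum
  rwa [inv_mul_le_iff₀ (sub_pos.2 hr1), mul_comm] at htsum

lemma lipschitzWith_of_monotone_exp_mul_sub (hβ : 0 < β) (hφ : Monotone φ)
    (h0 : ∀ t, 0 ≤ φ t) (hK : ∀ t, φ t ≤ K)
    (hΓ : ∀ s, 0 < s → Monotone fun t => exp (β * t) * (φ (t + s) - φ t)) :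
    LipschitzWith (K * β).toNNReal φ := by
  refine LipschitzWith.of_le_add_mul' _ fun u t => ?_
  rcases le_or_gt u t with hut | htu
  · have : 0 ≤ K * β * dist u t := by have := (h0 t).trans (hK t); positivity
    linarith [hφ hut]
  have hK0 : 0 ≤ K := (h0 t).trans (hK t)
  have h := sub_le_mul_one_sub_exp_of_monotone_exp_mul_sub hβ hφ h0 hK
    (hΓ _ (sub_pos.2 htu)) (sub_pos.2 htu) t
  rw [add_sub_cancel] at h
  rw [dist_eq_norm, Real.norm_of_nonneg (sub_pos.2 htu).le]
  nlinarith [one_sub_le_exp_neg (β * (u - t))]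

end Profile

section FTC

variable {ψ d : ℝ → ℝ} {a b : ℝ}

lemma deriv_ae_eq_of_ae_hasDerivAt (hd : ∀ᵐ x, HasDerivAt ψ (d x) x) : deriv ψ =ᵐ[volume] d := by
  filter_upwards [hd] with x hx using hx.deriv

lemma integral_deriv_eq_of_ae_hasDerivAt (hd : ∀ᵐ x, HasDerivAt ψ (d x) x) :
    ∫ x in a..b, deriv ψ x = ∫ x in a..b, d x :=
  intervalIntegral.integral_congr_ae
    ((deriv_ae_eq_of_ae_hasDerivAt hd).mono fun _ hx _ => hx)

lemma AbsolutelyContinuousOnInterval.intervalIntegrable_of_ae_hasDerivAt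
    (hψ : AbsolutelyContinuousOnInterval ψ a b) (hd : ∀ᵐ x, HasDerivAt ψ (d x) x) :
    IntervalIntegrable d volume a b :=
  hψ.intervalIntegrable_deriv.congr_ae (ae_restrict_of_ae (deriv_ae_eq_of_ae_hasDerivAt hd))

lemma AbsolutelyContinuousOnInterval.integral_eq_sub_of_ae_hasDerivAt
    (hψ : AbsolutelyContinuousOnInterval ψ a b) (hd : ∀ᵐ x, HasDerivAt ψ (d x) x) :
    ∫ x in a..b, d x = ψ b - ψ a := by
  rw [← integral_deriv_eq_of_ae_hasDerivAt hd, hψ.integral_deriv_eq_sub]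

lemma MonotoneOn.intervalIntegrable_of_ae_hasDerivAt (hψ : MonotoneOn ψ (uIcc a b))
    (hd : ∀ᵐ x, HasDerivAt ψ (d x) x) : IntervalIntegrable d volume a b :=
  hψ.intervalIntegrable_deriv.congr_ae (ae_restrict_of_ae (deriv_ae_eq_of_ae_hasDerivAt hd))

lemma MonotoneOn.integral_le_sub_of_ae_hasDerivAt (hψ : MonotoneOn ψ (uIcc a b))
    (hd : ∀ᵐ x, HasDerivAt ψ (d x) x) (hab : a ≤ b) : ∫ x in a..b, d x ≤ ψ b - ψ a := by
  have h := hψ.intervalIntegral_deriv_mem_uIcc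
  rw [uIcc_of_le (sub_nonneg.2 (hψ (by simp) (by simp) hab)),
    integral_deriv_eq_of_ae_hasDerivAt hd] at h
  exact h.2

end FTC

section Weighted

variable {β : ℝ} {u l h Du Dl : ℝ → ℝ} {a b : ℝ}

lemma hasDerivAt_exp_mul_mul {φ : ℝ → ℝ} {D x : ℝ} (hφ : HasDerivAt φ D x) :
    HasDerivAt (fun y => exp (β * y) * φ y) (exp (β * x) * (D + β * φ x)) x := by
  have hexp : HasDerivAt (fun y => exp (β * y)) (exp (β * x) * β) x := by
    simpa using ((hasDerivAt_id x).const_mul β).exp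
  exact (hexp.mul hφ).congr_deriv (by ring)

lemma absolutelyContinuousOnInterval_exp_mul_mul {L : NNReal} (hu : LipschitzWith L u) :
    AbsolutelyContinuousOnInterval (fun x => exp (β * x) * u x) a b :=
  (ContDiffOn.absolutelyContinuousOnInterval (by fun_prop)).fun_mul
    (hu.lipschitzOnWith.absolutelyContinuousOnInterval)

lemma intervalIntegral_exp_mul_le_of_ae_le {L : NNReal} (hu : LipschitzWith L u)
    (hDu : ∀ᵐ x, HasDerivAt u (Du x) x) (hh : Continuous h)
    (hhu : ∀ᵐ x, h x ≤ Du x + β * u x) (hab : a ≤ b) :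
    ∫ x in a..b, exp (β * x) * h x ≤ exp (β * b) * u b - exp (β * a) * u a := by
  have hP := absolutelyContinuousOnInterval_exp_mul_mul (β := β) (a := a) (b := b) hu
  have hdP := hDu.mono fun x hx => hasDerivAt_exp_mul_mul (β := β) hx
  rw [← hP.integral_eq_sub_of_ae_hasDerivAt hdP]
  refine intervalIntegral.integral_mono_ae_restrict hab
    ((by fun_prop : Continuous fun x => exp (β * x) * h x).intervalIntegrable a b)
    (hP.intervalIntegrable_of_ae_hasDerivAt hdP) ?_
  filter_upwards [ae_restrict_of_ae hhu] with x hx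
  exact mul_le_mul_of_nonneg_left hx (exp_pos _).le

lemma exp_mul_sub_le_intervalIntegral_of_ae_le {L : NNReal} (hu : LipschitzWith L u)
    (hDu : ∀ᵐ x, HasDerivAt u (Du x) x) (hDl : ∀ᵐ x, HasDerivAt l (Dl x) x)
    (hmono : MonotoneOn (fun x => exp (β * x) * (u x - l x)) (uIcc a b)) (hh : Continuous h)
    (hlh : ∀ᵐ x, Dl x + β * l x ≤ h x) (hab : a ≤ b) :
    exp (β * b) * l b - exp (β * a) * l a ≤ ∫ x in a..b, exp (β * x) * h x := by
  set P := fun x => exp (β * x) * u x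
  set Q := fun x => exp (β * x) * (u x - l x)
  set p := fun x => exp (β * x) * (Du x + β * u x)
  set q := fun x => exp (β * x) * (Du x - Dl x + β * (u x - l x))
  have hP := absolutelyContinuousOnInterval_exp_mul_mul (β := β) (a := a) (b := b) hu
  have hdP : ∀ᵐ x, HasDerivAt P (p x) x := hDu.mono fun x hx => hasDerivAt_exp_mul_mul hx
  have hdQ : ∀ᵐ x, HasDerivAt Q (q x) x := by
    filter_upwards [hDu, hDl] with x hxu hxl using hasDerivAt_exp_mul_mul (hxu.sub hxl)
  have hp := hP.intervalIntegrable_of_ae_hasDerivAt hdP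
  have hq := hmono.intervalIntegrable_of_ae_hasDerivAt hdQ
  calc exp (β * b) * l b - exp (β * a) * l a = (P b - P a) - (Q b - Q a) := by ring
    _ ≤ (∫ x in a..b, p x) - ∫ x in a..b, q x := by
        rw [hP.integral_eq_sub_of_ae_hasDerivAt hdP]
        linarith [hmono.integral_le_sub_of_ae_hasDerivAt hdQ hab]
    _ = ∫ x in a..b, (p x - q x) := (intervalIntegral.integral_sub hp hq).symm
    _ ≤ ∫ x in a..b, exp (β * x) * h x := by
        refine intervalIntegral.integral_mono_ae_restrict hab (hp.sub hq)
          ((by fun_prop : Continuous fun x => exp (β * x) * h x).intervalIntegrable a b) ?_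
        filter_upwards [ae_restrict_of_ae hlh] with x hx
        calc p x - q x = exp (β * x) * (Dl x + β * l x) := by ring
          _ ≤ exp (β * x) * h x := mul_le_mul_of_nonneg_left hx (exp_pos _).le

lemma integrableOn_exp_mul_Iic_of_ae_abs_le (hβ : 0 < β) (hh : Continuous h) {C : ℝ}
    (hC : ∀ᵐ x, |h x| ≤ C) (t : ℝ) : IntegrableOn (fun x => exp (β * x) * h x) (Iic t) := by
  refine Integrable.mono' ((integrableOn_exp_mul_Iic hβ t).mul_const C)
    (by fun_prop : Continuous fun x => exp (β * x) * h x).aestronglyMeasurable ?_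
  filter_upwards [ae_restrict_of_ae hC] with x hx
  rw [norm_mul, norm_of_nonneg (exp_pos _).le, Real.norm_eq_abs]
  exact mul_le_mul_of_nonneg_left hx (exp_pos _).le

theorem integral_Iic_exp_mul_mem_Icc {L : NNReal} {K Mu Ml : ℝ} (hβ : 0 < β)
    (hu : LipschitzWith L u) (hDu : ∀ᵐ x, HasDerivAt u (Du x) x)
    (hDl : ∀ᵐ x, HasDerivAt l (Dl x) x) (hMu : ∀ᵐ x, |Du x| ≤ Mu) (hMl : ∀ᵐ x, |Dl x| ≤ Ml)
    (hl0 : ∀ x, 0 ≤ l x) (hlu : ∀ x, l x ≤ u x) (huK : ∀ x, u x ≤ K)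
    (hmono : Monotone fun x => exp (β * x) * (u x - l x)) (hh : Continuous h)
    (hhu : ∀ᵐ x, h x ≤ Du x + β * u x) (hlh : ∀ᵐ x, Dl x + β * l x ≤ h x) (t : ℝ) :
    ∫ x in Iic t, exp (β * x) * h x ∈ Icc (exp (β * t) * l t) (exp (β * t) * u t) := by
  have hC : ∀ᵐ x, |h x| ≤ Mu + Ml + β * K := by
    filter_upwards [hMu, hMl, hhu, hlh] with x hxu hxl hxhu hxlh
    obtain ⟨hDu₁, hDu₂⟩ := abs_le.1 hxu
    obtain ⟨hDl₁, hDl₂⟩ := abs_le.1 hxl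
    have := mul_nonneg hβ.le (hl0 x)
    have := mul_le_mul_of_nonneg_left (hlu x) hβ.le
    have := mul_le_mul_of_nonneg_left (huK x) hβ.le
    exact abs_le.2 ⟨by linarith, by linarith⟩
  have htend : Tendsto (fun a => ∫ x in a..t, exp (β * x) * h x) atBot
      (𝓝 (∫ x in Iic t, exp (β * x) * h x)) :=
    intervalIntegral_tendsto_integral_Iic t (integrableOn_exp_mul_Iic_of_ae_abs_le hβ hh hC t)
      tendsto_id
  have hexp : Tendsto (fun a => exp (β * t) * l t - exp (β * a) * K) atBot
      (𝓝 (exp (β * t) * l t)) := by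
    have := (tendsto_exp_atBot.comp (tendsto_id.const_mul_atBot hβ)).mul_const K
    simpa using this.const_sub (exp (β * t) * l t)
  constructor
  · refine le_of_tendsto_of_tendsto hexp htend ?_
    filter_upwards [eventually_le_atBot t] with a ha
    have := exp_mul_sub_le_intervalIntegral_of_ae_le hu hDu hDl (hmono.monotoneOn _) hh hlh ha
    have : exp (β * a) * l a ≤ exp (β * a) * K :=
      mul_le_mul_of_nonneg_left ((hlu a).trans (huK a)) (exp_pos _).le
    linarith
  · refine le_of_tendsto htend ?_
    filter_upwards [eventually_le_atBot t] with a ha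
    have := intervalIntegral_exp_mul_le_of_ae_le hu hDu hh hhu ha
    have : 0 ≤ exp (β * a) * u a := mul_nonneg (exp_pos _).le ((hl0 a).trans (hlu a))
    linarith

end Weighted

section Delay

variable {τ : ℝ}

lemma continuous_seg {u : ℝ → ℝ} (hu : Continuous u) (t : ℝ) : Continuous (seg τ u t) :=
  hu.comp (continuous_const.add continuous_subtype_val)

lemma continuous_apply_seg {f : (Icc (-τ) (0 : ℝ) → ℝ) → ℝ}
    (hf : Continuous fun φ : C(Icc (-τ) (0 : ℝ), ℝ) => f ⇑φ) {u : ℝ → ℝ} (hu : Continuous u) :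
    Continuous fun t => f (seg τ u t) := by
  have hseg : Continuous fun t => (⟨seg τ u t, continuous_seg hu t⟩ : C(Icc (-τ) (0 : ℝ), ℝ)) :=
    ContinuousMap.continuous_of_continuous_uncurry _
      (hu.comp (continuous_fst.add (continuous_subtype_val.comp continuous_snd)))
  exact hf.comp hseg

lemma add_mul_le_add_mul_of_H2 (hτ : 0 < τ) {f : (Icc (-τ) (0 : ℝ) → ℝ) → ℝ} {K β : ℝ}
    (hH2 : ∀ φ ψ : Set.Icc (-τ) (0 : ℝ) → ℝ, Continuous φ → Continuous ψ →
      (∀ s, 0 ≤ ψ s ∧ ψ s ≤ φ s ∧ φ s ≤ K) →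
      Monotone (fun s : Set.Icc (-τ) (0 : ℝ) => Real.exp (β * s.1) * (φ s - ψ s)) →
      0 ≤ f φ - f ψ +
        β * (φ ⟨0, Set.right_mem_Icc.mpr (neg_nonpos.mpr hτ.le)⟩ -
             ψ ⟨0, Set.right_mem_Icc.mpr (neg_nonpos.mpr hτ.le)⟩))
    {φ ψ : ℝ → ℝ} (hφ : Continuous φ) (hψ : Continuous ψ)
    (hbd : ∀ t, 0 ≤ ψ t ∧ ψ t ≤ φ t ∧ φ t ≤ K)
    (hmono : Monotone fun t => exp (β * t) * (φ t - ψ t)) (t : ℝ) :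
    f (seg τ ψ t) + β * ψ t ≤ f (seg τ φ t) + β * φ t := by
  have hseg :
      Monotone fun s : Icc (-τ) (0 : ℝ) => exp (β * s.1) * (seg τ φ t s - seg τ ψ t s) := by
    intro v w hvw
    have hE (x : ℝ) : exp (-(β * t)) * (exp (β * (t + x)) * (φ (t + x) - ψ (t + x))) =
        exp (β * x) * (φ (t + x) - ψ (t + x)) := by
      rw [← mul_assoc, ← exp_add]; ring_nf
    have h := mul_le_mul_of_nonneg_left (hmono (show t + v.1 ≤ t + w.1 by simpa using hvw))
      (exp_pos (-(β * t))).le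
    simpa only [seg, hE] using h
  have h := hH2 _ _ (continuous_seg hφ t) (continuous_seg hψ t) (fun s => hbd _) hseg
  simp only [seg, add_zero] at h
  linarith

end Delay

theorem x1_between_lower_and_upper_general
    (τ : ℝ) (hτ : 0 < τ)
    (f : (Set.Icc (-τ) (0 : ℝ) → ℝ) → ℝ)
    (hf : Continuous fun φ : C(Set.Icc (-τ) (0 : ℝ), ℝ) => f ⇑φ)
    (K : ℝ)
    (β : ℝ) (hβ : 0 < β)
    -- (H2)
    (hH2 : ∀ φ ψ : Set.Icc (-τ) (0 : ℝ) → ℝ, Continuous φ → Continuous ψ →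
      (∀ s, 0 ≤ ψ s ∧ ψ s ≤ φ s ∧ φ s ≤ K) →
      Monotone (fun s : Set.Icc (-τ) (0 : ℝ) => Real.exp (β * s.1) * (φ s - ψ s)) →
      0 ≤ f φ - f ψ +
        β * (φ ⟨0, Set.right_mem_Icc.mpr (neg_nonpos.mpr hτ.le)⟩ -
             ψ ⟨0, Set.right_mem_Icc.mpr (neg_nonpos.mpr hτ.le)⟩))
    -- φ̄ ∈ Γ
    (φb : ℝ → ℝ) (hφbc : Continuous φb) (hφbm : Monotone φb)
    (hφbΓ : ∀ s : ℝ, 0 < s →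
      Monotone fun t : ℝ => Real.exp (β * t) * (φb (t + s) - φb t))
    -- φ̄ is an upper solution
    (hup : ∃ D : ℝ → ℝ, (∀ᵐ t ∂(volume : Measure ℝ), HasDerivAt φb (D t) t) ∧
      (∃ M : ℝ, ∀ᵐ t ∂(volume : Measure ℝ), |D t| ≤ M) ∧
      (∀ᵐ t ∂(volume : Measure ℝ), f (seg τ φb t) ≤ D t))
    -- φ̲ is a lower solution satisfying (C1) and (C3)
    (φl : ℝ → ℝ) (hφlc : Continuous φl)
    (hlow : ∃ D : ℝ → ℝ, (∀ᵐ t ∂(volume : Measure ℝ), HasDerivAt φl (D t) t) ∧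
      (∃ M : ℝ, ∀ᵐ t ∂(volume : Measure ℝ), |D t| ≤ M) ∧
      (∀ᵐ t ∂(volume : Measure ℝ), D t ≤ f (seg τ φl t)))
    (hC1 : ∀ t : ℝ, 0 ≤ φl t ∧ φl t ≤ φb t ∧ φb t ≤ K)
    (hC3 : Monotone fun t : ℝ => Real.exp (β * t) * (φb t - φl t))
    -- x₁
    (x₁ : ℝ → ℝ)
    (hx₁ : ∀ t : ℝ, x₁ t =
      ∫ s in Set.Iic t, Real.exp (-β * (t - s)) * (f (seg τ φb s) + β * φb s)) :
    ∀ t : ℝ, φl t ≤ x₁ t ∧ x₁ t ≤ φb t := by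
  obtain ⟨Db, hDb, ⟨Mb, hMb⟩, hUb⟩ := hup
  obtain ⟨Dl, hDl, ⟨Ml, hMl⟩, hLl⟩ := hlow
  have hφb0 (t : ℝ) : 0 ≤ φb t := (hC1 t).1.trans (hC1 t).2.1
  have hLip := lipschitzWith_of_monotone_exp_mul_sub hβ hφbm hφb0 (fun t => (hC1 t).2.2) hφbΓ
  have hH := add_mul_le_add_mul_of_H2 hτ hH2 hφbc hφlc hC1 hC3
  have hbounds := integral_Iic_exp_mul_mem_Icc (h := fun s => f (seg τ φb s) + β * φb s)
    hβ hLip hDb hDl hMb hMl (fun t => (hC1 t).1) (fun t => (hC1 t).2.1) (fun t => (hC1 t).2.2) hC3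
    ((continuous_apply_seg hf hφbc).add (continuous_const.mul hφbc))
    (hUb.mono fun _ h => by linarith) (hLl.mono fun s h => by linarith [hH s])
  intro t
  have hx : x₁ t = (exp (β * t))⁻¹ *
      ∫ s in Iic t, exp (β * s) * (f (seg τ φb s) + β * φb s) := by
    rw [hx₁, ← integral_const_mul]
    congr 1 with s
    rw [← exp_neg, ← mul_assoc, ← exp_add]
    ring_nf
  rw [hx, le_inv_mul_iff₀ (exp_pos _), inv_mul_le_iff₀ (exp_pos _)]
  exact hbounds t

/-- Under (H1) and (H2) with `β > 0`, if `φ̄ ∈ Γ` is an upper solution of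
`−u'(t) + f(u_t) = 0`, `φ̲` is a lower solution satisfying (C1) and (C3), and
`x₁(t) = ∫_{−∞}^t e^{−β(t−s)} H(φ̄)(s) ds`, then `φ̲ ≤ x₁ ≤ φ̄` on `ℝ`. -/
theorem x1_between_lower_and_upper
    (τ : ℝ) (hτ : 0 < τ)
    (f : (Set.Icc (-τ) (0 : ℝ) → ℝ) → ℝ)
    (hf : Continuous fun φ : C(Set.Icc (-τ) (0 : ℝ), ℝ) => f ⇑φ)
    (K : ℝ) (hK : 0 < K)
    -- (H1)
    (hH1₀ : f (fun _ => (0 : ℝ)) = 0) (hH1K : f (fun _ => K) = 0)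
    (hH1ne : ∀ u : ℝ, 0 < u → u < K → f (fun _ => u) ≠ 0)
    (β : ℝ) (hβ : 0 < β)
    -- (H2)
    (hH2 : ∀ φ ψ : Set.Icc (-τ) (0 : ℝ) → ℝ, Continuous φ → Continuous ψ →
      (∀ s, 0 ≤ ψ s ∧ ψ s ≤ φ s ∧ φ s ≤ K) →
      Monotone (fun s : Set.Icc (-τ) (0 : ℝ) => Real.exp (β * s.1) * (φ s - ψ s)) →
      0 ≤ f φ - f ψ +
        β * (φ ⟨0, Set.right_mem_Icc.mpr (neg_nonpos.mpr hτ.le)⟩ -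
             ψ ⟨0, Set.right_mem_Icc.mpr (neg_nonpos.mpr hτ.le)⟩))
    -- φ̄ ∈ Γ
    (φb : ℝ → ℝ) (hφbc : Continuous φb) (hφbm : Monotone φb)
    (hφb₀ : Tendsto φb atBot (nhds 0)) (hφbK : Tendsto φb atTop (nhds K))
    (hφbΓ : ∀ s : ℝ, 0 < s →
      Monotone fun t : ℝ => Real.exp (β * t) * (φb (t + s) - φb t))
    -- φ̄ is an upper solution
    (hup : ∃ D : ℝ → ℝ, (∀ᵐ t ∂(volume : Measure ℝ), HasDerivAt φb (D t) t) ∧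
      (∃ M : ℝ, ∀ᵐ t ∂(volume : Measure ℝ), |D t| ≤ M) ∧
      (∀ᵐ t ∂(volume : Measure ℝ), f (seg τ φb t) ≤ D t))
    -- φ̲ is a lower solution satisfying (C1) and (C3)
    (φl : ℝ → ℝ) (hφlc : Continuous φl)
    (hlow : ∃ D : ℝ → ℝ, (∀ᵐ t ∂(volume : Measure ℝ), HasDerivAt φl (D t) t) ∧
      (∃ M : ℝ, ∀ᵐ t ∂(volume : Measure ℝ), |D t| ≤ M) ∧
      (∀ᵐ t ∂(volume : Measure ℝ), D t ≤ f (seg τ φl t)))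
    (hC1 : ∀ t : ℝ, 0 ≤ φl t ∧ φl t ≤ φb t ∧ φb t ≤ K)
    (hC3 : Monotone fun t : ℝ => Real.exp (β * t) * (φb t - φl t))
    -- x₁
    (x₁ : ℝ → ℝ)
    (hx₁ : ∀ t : ℝ, x₁ t =
      ∫ s in Set.Iic t, Real.exp (-β * (t - s)) * (f (seg τ φb s) + β * φb s)) :
    ∀ t : ℝ, φl t ≤ x₁ t ∧ x₁ t ≤ φb t :=
  x1_between_lower_and_upper_general τ hτ f hf K β hβ hH2 φb hφbc hφbm hφbΓ hup φl hφlc hlow hC1 hC3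
    x₁ hx₁
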